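/- arXiv:2306.02065 — 3 statements merged into one kernel-verified Lean document; each statement's English description precedes it below -/
import Mathlib

section
/- Let G be a finite simple undirected graph whose girth is at least 2·χ(G) − 1, where χ(G) is the chromatic number of G. Then G is sc-orientable. -/
/-- An orientation of a simple graph `G`: each edge `{u,v}` receives exactly one
direction, yielding a directed graph with arc relation `arc`. -/
structure EdgeOrientation {V : Type*} (G : SimpleGraph V) where
  arc : V → V → Prop
  adj_iff : ∀ u v, G.Adj u v ↔ (arc u v ∨ arc v u)
  asymm : ∀ u v, arc u v → ¬ arc v u

/-- `p` is a directed path in the digraph `D`: a nonempty list of pairwise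
distinct vertices in which consecutive vertices are joined by arcs of `D`. -/
def IsDipath {V : Type*} (D : V → V → Prop) (p : List V) : Prop :=
  p ≠ [] ∧ p.Chain' D ∧ p.Nodup

/-- `p` is a directed path from `s` to `t` in the digraph `D`. -/
def IsDipathFromTo {V : Type*} (D : V → V → Prop) (s t : V) (p : List V) : Prop :=
  IsDipath D p ∧ p.head? = some s ∧ p.getLast? = some t

/-- A digraph `D` is singly connected if for every ordered pair `(s,t)` there is
at most one directed path from `s` to `t`. -/
def SinglyConnected {V : Type*} (D : V → V → Prop) : Prop :=
  ∀ s t p q, IsDipathFromTo D s t p → IsDipathFromTo D s t q → p = q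

/-- An orientation is an sc-orientation if the resulting digraph is singly connected. -/
def IsSCOrientation {V : Type*} {G : SimpleGraph V} (σ : EdgeOrientation G) : Prop :=
  SinglyConnected σ.arc

/-- A graph is sc-orientable if it admits an sc-orientation. -/
def SCOrientable {V : Type*} (G : SimpleGraph V) : Prop :=
  ∃ σ : EdgeOrientation G, IsSCOrientation σ

/-!
Orient every edge of a colouring with `χ(G)` colours towards the larger colour. Colours strictly
increase along a directed path, so it has at most `χ(G)` vertices. Two distinct directed paths
from `s` to `t` are two distinct undirected paths, whose edges span a subgraph that is not a
forest; it has at most `2χ(G) - 2` edges, so `G` would have a cycle shorter than `2χ(G) - 1`.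
-/

namespace SimpleGraph

variable {V : Type*} {G : SimpleGraph V}

theorem egirth_le_length_add_length {s t : V} {p q : G.Walk s t} (hp : p.IsPath)
    (hq : q.IsPath) (hpq : p ≠ q) : G.egirth ≤ p.length + q.length := by
  classical
  set E : Finset (Sym2 V) := p.edges.toFinset ∪ q.edges.toFinset
  set H : SimpleGraph V := fromEdgeSet E
  have hHG : H ≤ G := (fromEdgeSet_le G).mpr fun e he ↦ by
    rcases Finset.mem_union.mp he.1 with he | he
    · exact p.edges_subset_edgeSet (List.mem_toFinset.mp he)
    · exact q.edges_subset_edgeSet (List.mem_toFinset.mp he)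
  have hmem {w : G.Walk s t} (hw : w.edges.toFinset ⊆ E) : ∀ e ∈ w.edges, e ∈ H.edgeSet :=
    fun e he ↦ by
      rw [edgeSet_fromEdgeSet]
      exact ⟨hw (List.mem_toFinset.mpr he),
        G.not_isDiag_of_mem_edgeSet (w.edges_subset_edgeSet he)⟩
  have hp' := hmem (w := p) Finset.subset_union_left
  have hq' := hmem (w := q) Finset.subset_union_right
  have hH : ¬ H.IsAcyclic := fun hacyc ↦ hpq <| Walk.ext_support <| by
    have := congrArg (fun w : H.Path s t ↦ w.1.support) <|
      (hacyc.subsingleton_path s t).elim ⟨_, hp.transfer hp'⟩ ⟨_, hq.transfer hq'⟩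
    simpa only [Walk.support_transfer] using this
  obtain ⟨_, c, hc, -⟩ := exists_egirth_eq_length.mpr hH
  have hcE : c.edges.toFinset ⊆ E := fun e he ↦ by
    have := c.edges_subset_edgeSet (List.mem_toFinset.mp he)
    rw [edgeSet_fromEdgeSet] at this
    exact this.1
  have hclen : c.length ≤ p.length + q.length := calc
    c.length = c.edges.toFinset.card := by
      rw [List.toFinset_card_of_nodup hc.edges_nodup, Walk.length_edges]
    _ ≤ E.card := Finset.card_le_card hcE
    _ ≤ p.edges.toFinset.card + q.edges.toFinset.card := Finset.card_union_le _ _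
    _ ≤ p.length + q.length := by
      grw [List.toFinset_card_le, List.toFinset_card_le, Walk.length_edges, Walk.length_edges]
  calc G.egirth ≤ H.egirth := egirth_anti hHG
    _ ≤ c.length := egirth_le_length hc
    _ ≤ p.length + q.length := mod_cast hclen

end SimpleGraph

open SimpleGraph

namespace EdgeOrientation

variable {V : Type*} {G : SimpleGraph V}

theorem exists_isPath_of_isDipathFromTo (σ : EdgeOrientation G) {s t : V} {p : List V}
    (hp : IsDipathFromTo σ.arc s t p) : ∃ w : G.Walk s t, w.IsPath ∧ w.support = p := by
  obtain ⟨⟨hne, hchain, hnodup⟩, hs, ht⟩ := hp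
  have hadj : p.IsChain G.Adj := hchain.imp fun u v h ↦ (σ.adj_iff u v).mpr (.inl h)
  have hs' : p.head hne = s := Option.some_injective _ (List.head?_eq_some_head hne ▸ hs)
  have ht' : p.getLast hne = t := Option.some_injective _ (List.getLast?_eq_some_getLast hne ▸ ht)
  refine ⟨(Walk.ofSupport p hne hadj).copy hs' ht', .mk' ?_, ?_⟩ <;>
    simp only [Walk.support_copy, Walk.support_ofSupport, hnodup]

def ofColoring {α : Type*} [LinearOrder α] (c : G.Coloring α) : EdgeOrientation G where
  arc u v := G.Adj u v ∧ c u < c v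
  adj_iff u v := by
    refine ⟨fun h ↦ ?_, by rintro (⟨h, -⟩ | ⟨h, -⟩) <;> [exact h; exact h.symm]⟩
    rcases (c.valid h).lt_or_gt with hlt | hgt
    exacts [.inl ⟨h, hlt⟩, .inr ⟨h.symm, hgt⟩]
  asymm _ _ h h' := h.2.asymm h'.2

theorem length_le_card_of_isChain_ofColoring {α : Type*} [LinearOrder α] [Fintype α]
    (c : G.Coloring α) {p : List V} (hp : p.IsChain (ofColoring c).arc) :
    p.length ≤ Fintype.card α := by
  have hlt : (p.map c).IsChain (· < ·) := (List.isChain_map c).mpr (hp.imp fun _ _ h ↦ h.2)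
  rw [← List.length_map c]
  exact List.Nodup.length_le_card ((List.isChain_iff_pairwise.mp hlt).imp ne_of_lt)

theorem isSCOrientation_of_forall_length_le (σ : EdgeOrientation G) (k : ℕ)
    (hk : ∀ p, IsDipath σ.arc p → p.length ≤ k) (hg : 2 * (k : ℕ∞) - 1 ≤ G.egirth) :
    IsSCOrientation σ := by
  intro s t p q hp hq
  by_contra hpq
  obtain ⟨wp, hwp, rfl⟩ := σ.exists_isPath_of_isDipathFromTo hp
  obtain ⟨wq, hwq, rfl⟩ := σ.exists_isPath_of_isDipathFromTo hq
  have hlenp := hk _ hp.1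
  have hlenq := hk _ hq.1
  rw [Walk.length_support] at hlenp hlenq
  have hcycle : 2 * k - 1 ≤ wp.length + wq.length := by
    have := hg.trans (egirth_le_length_add_length hwp hwq fun h ↦ hpq (congrArg _ h))
    exact_mod_cast this
  omega

end EdgeOrientation

/-- If the girth of a finite graph `G` is at least `2·χ(G) − 1`,
then `G` is sc-orientable.  (Girth is `⊤` for acyclic graphs.) -/
theorem scOrientable_of_girth_ge_two_mul_chromaticNumber_sub_one
    {V : Type*} [Fintype V] (G : SimpleGraph V)
    (h : 2 * G.chromaticNumber - 1 ≤ G.egirth) :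
    SCOrientable G := by
  obtain ⟨c⟩ := G.colorable_chromaticNumber_of_fintype
  have hχ : G.chromaticNumber = G.chromaticNumber.toNat := (ENat.natCast_toNat <|
    chromaticNumber_ne_top_iff_exists.mpr ⟨_, G.colorable_of_fintype⟩).symm
  refine ⟨.ofColoring c, EdgeOrientation.isSCOrientation_of_forall_length_le _ _
    (fun p hp ↦ ?_) (hχ ▸ h)⟩
  simpa using EdgeOrientation.length_le_card_of_isChain_ofColoring c hp.2.1
end

section
/- A distance hereditary finite simple undirected graph is sc-orientable if and only if it is strongly distance hereditary. -/
/-- `DHOn G s` : the induced subgraph of `G` on the finite vertex set `s` can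
be constructed, starting from a single isolated vertex, by repeatedly adding a
pendant vertex, a true twin, or a false twin. -/
inductive DHOn {V : Type*} [DecidableEq V] (G : SimpleGraph V) : Finset V → Prop
  | single (v : V) : DHOn G {v}
  | pendant {s : Finset V} (u v : V) (hu : u ∈ s) (hv : v ∉ s)
      (hs : DHOn G s) (hN : ∀ x ∈ s, (G.Adj v x ↔ x = u)) :
      DHOn G (insert v s)
  | trueTwin {s : Finset V} (u v : V) (hu : u ∈ s) (hv : v ∉ s)
      (hs : DHOn G s) (hN : ∀ x ∈ s, (G.Adj v x ↔ (G.Adj u x ∨ x = u))) :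
      DHOn G (insert v s)
  | falseTwin {s : Finset V} (u v : V) (hu : u ∈ s) (hv : v ∉ s)
      (hs : DHOn G s) (hN : ∀ x ∈ s, (G.Adj v x ↔ G.Adj u x)) :
      DHOn G (insert v s)

/-- `SDHOn G s` : the induced subgraph of `G` on `s` can be constructed,
starting from a single isolated vertex, by repeatedly adding a pendant vertex,
a true twin of a vertex of degree 1, or a false twin of a vertex whose
neighborhood is an independent set. -/
inductive SDHOn {V : Type*} [DecidableEq V] (G : SimpleGraph V) : Finset V → Prop
  | single (v : V) : SDHOn G {v}
  | pendant {s : Finset V} (u v : V) (hu : u ∈ s) (hv : v ∉ s)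
      (hs : SDHOn G s) (hN : ∀ x ∈ s, (G.Adj v x ↔ x = u)) :
      SDHOn G (insert v s)
  | trueTwin {s : Finset V} (u v : V) (hu : u ∈ s) (hv : v ∉ s)
      (hs : SDHOn G s) (hN : ∀ x ∈ s, (G.Adj v x ↔ (G.Adj u x ∨ x = u)))
      (hdeg : ∃! x, x ∈ s ∧ G.Adj u x) :
      SDHOn G (insert v s)
  | falseTwin {s : Finset V} (u v : V) (hu : u ∈ s) (hv : v ∉ s)
      (hs : SDHOn G s) (hN : ∀ x ∈ s, (G.Adj v x ↔ G.Adj u x))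
      (hind : ∀ x ∈ s, ∀ y ∈ s, G.Adj u x → G.Adj u y → ¬ G.Adj x y) :
      SDHOn G (insert v s)

/-- A finite graph is distance hereditary if it can be built from a single
vertex by adding pendant vertices, true twins and false twins. -/
def DistanceHereditary {V : Type*} [Fintype V] [DecidableEq V]
    (G : SimpleGraph V) : Prop :=
  DHOn G Finset.univ

/-- A finite graph is strongly distance hereditary if it can be built from a
single vertex by adding pendant vertices, true twins of vertices of degree 1,
and false twins of vertices with independent neighborhood. -/
def StronglyDistanceHereditary {V : Type*} [Fintype V] [DecidableEq V]
    (G : SimpleGraph V) : Prop :=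
  SDHOn G Finset.univ

section

variable {V : Type*}

def IsSource (D : V → V → Prop) (z : V) : Prop := ∀ x, ¬ D x z

def IsSink (D : V → V → Prop) (z : V) : Prop := ∀ y, ¬ D z y

theorem isDipathFromTo_iff {D : V → V → Prop} {s t : V} {p : List V} :
    IsDipathFromTo D s t p ↔ p.IsChain D ∧ p.Nodup ∧ p.head? = some s ∧ p.getLast? = some t := by
  refine ⟨fun ⟨⟨_, hc, hn⟩, hh, hl⟩ => ⟨hc, hn, hh, hl⟩,
    fun ⟨hc, hn, hh, hl⟩ => ⟨⟨?_, hc, hn⟩, hh, hl⟩⟩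
  rintro rfl
  simp at hh

namespace IsDipathFromTo

variable {D E : V → V → Prop} {s t x z : V} {p : List V}

theorem nodup (h : IsDipathFromTo D s t p) : p.Nodup := h.1.2.2

theorem head_mem (h : IsDipathFromTo D s t p) : s ∈ p := List.mem_of_mem_head? h.2.1

theorem last_mem (h : IsDipathFromTo D s t p) : t ∈ p := List.mem_of_mem_getLast? h.2.2

theorem eq_singleton (h : IsDipathFromTo D s s p) : p = [s] := by
  obtain ⟨_, hn, hh, hl⟩ := isDipathFromTo_iff.1 h
  obtain ⟨P, rfl⟩ : ∃ P, p = s :: P := ⟨p.tail, (List.cons_head?_tail hh).symm⟩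
  rcases P with _ | ⟨a, P⟩
  · rfl
  · rw [List.getLast?_cons_cons] at hl
    exact absurd (List.mem_of_mem_getLast? hl) (List.nodup_cons.1 hn).1

theorem cons (hsx : D s x) (h : IsDipathFromTo D x t p) (hs : s ∉ p) :
    IsDipathFromTo D s t (s :: p) := by
  obtain ⟨hc, hn, hh, hl⟩ := isDipathFromTo_iff.1 h
  refine isDipathFromTo_iff.2
    ⟨List.isChain_cons.2 ⟨fun y hy => ?_, hc⟩, List.nodup_cons.2 ⟨hs, hn⟩, rfl, ?_⟩
  · rw [hh, Option.mem_some_iff] at hy; exact hy ▸ hsx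
  · rcases p with _ | ⟨a, p⟩
    · simp at hh
    · rwa [List.getLast?_cons_cons]

theorem reverse (h : IsDipathFromTo D s t p) : IsDipathFromTo (flip D) t s p.reverse := by
  obtain ⟨hc, hn, hh, hl⟩ := isDipathFromTo_iff.1 h
  exact isDipathFromTo_iff.2
    ⟨List.isChain_reverse.2 hc, List.nodup_reverse.2 hn, by simpa using hl, by simpa using hh⟩

theorem exists_eq_cons (h : IsDipathFromTo D s t p) (hst : s ≠ t) :
    ∃ x P, p = s :: P ∧ D s x ∧ IsDipathFromTo D x t P ∧ s ∉ P := by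
  obtain ⟨hc, hn, hh, hl⟩ := isDipathFromTo_iff.1 h
  obtain ⟨P, rfl⟩ : ∃ P, p = s :: P := ⟨p.tail, (List.cons_head?_tail hh).symm⟩
  rcases P with _ | ⟨x, P⟩
  · simp only [List.getLast?_singleton, Option.some_inj] at hl
    exact absurd hl hst
  · rw [List.isChain_cons_cons] at hc
    rw [List.nodup_cons] at hn
    rw [List.getLast?_cons_cons] at hl
    exact ⟨x, x :: P, rfl, hc.1, isDipathFromTo_iff.2 ⟨hc.2, hn.2, rfl, hl⟩, hn.1⟩

theorem exists_eq_concat (h : IsDipathFromTo D s t p) (hst : s ≠ t) :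
    ∃ x A, p = A ++ [t] ∧ D x t ∧ IsDipathFromTo D s x A ∧ t ∉ A := by
  obtain ⟨x, P, hp, htx, hP, htP⟩ := h.reverse.exists_eq_cons hst.symm
  refine ⟨x, P.reverse, ?_, htx, by simpa using hP.reverse, by simpa using htP⟩
  rw [← List.reverse_reverse p, hp]
  simp

theorem split (h : IsDipathFromTo D s t p) (hz : z ∈ p) :
    ∃ A B, p = A ++ z :: B ∧ IsDipathFromTo D s z (A ++ [z]) ∧ IsDipathFromTo D z t (z :: B) := by
  obtain ⟨hc, hn, hh, hl⟩ := isDipathFromTo_iff.1 h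
  obtain ⟨A, B, rfl⟩ := List.append_of_mem hz
  refine ⟨A, B, rfl,
    isDipathFromTo_iff.2 ⟨hc.infix ⟨[], B, by simp⟩, hn.sublist (by simp), ?_, by simp⟩,
    isDipathFromTo_iff.2 ⟨hc.infix ⟨A, [], by simp⟩, hn.sublist (by simp), rfl, ?_⟩⟩
  · rcases A with _ | ⟨a, A⟩ <;> simpa using hh
  · rcases B.eq_nil_or_concat with rfl | ⟨B, b, rfl⟩ <;> simpa using hl

theorem mono (h : IsDipathFromTo D s t p) (hDE : ∀ x ∈ p, ∀ y ∈ p, D x y → E x y) :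
    IsDipathFromTo E s t p := by
  obtain ⟨hc, hn, hh, hl⟩ := isDipathFromTo_iff.1 h
  refine isDipathFromTo_iff.2 ⟨?_, hn, hh, hl⟩
  exact (List.IsChain.iff_mem.1 hc).imp fun x y ⟨hx, hy, hxy⟩ => hDE x hx y hy hxy

theorem eq_of_isSource (h : IsDipathFromTo D s t p) (hz : z ∈ p) (hsrc : IsSource D z) :
    z = s := by
  obtain ⟨A, B, -, hA, -⟩ := h.split hz
  by_contra hne
  obtain ⟨x, -, -, hxz, -⟩ := hA.exists_eq_concat (Ne.symm hne)
  exact hsrc x hxz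

theorem eq_of_isSink (h : IsDipathFromTo D s t p) (hz : z ∈ p) (hsnk : IsSink D z) :
    z = t := by
  obtain ⟨A, B, -, -, hB⟩ := h.split hz
  by_contra hne
  obtain ⟨y, -, -, hzy, -⟩ := hB.exists_eq_cons hne
  exact hsnk y hzy

theorem mono_of_not_mem (h : IsDipathFromTo D s t p) {v : V}
    (hres : ∀ x y, D x y → x ≠ v → y ≠ v → E x y) (hv : v ∉ p) : IsDipathFromTo E s t p :=
  h.mono fun x hx y hy hxy => hres x y hxy (ne_of_mem_of_not_mem hx hv) (ne_of_mem_of_not_mem hy hv)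

end IsDipathFromTo

-- `c` and `d` may be adjacent, so `K₄` is not diamond-free in this sense.
def DiamondFree (G : SimpleGraph V) : Prop :=
  ∀ ⦃a b c d⦄, G.Adj a b → G.Adj a c → G.Adj a d → G.Adj b c → G.Adj b d → c = d

namespace EdgeOrientation

variable {G : SimpleGraph V} (σ : EdgeOrientation G) {a b c : V}

theorem adj_of_arc (h : σ.arc a b) : G.Adj a b := (σ.adj_iff a b).2 (Or.inl h)

theorem isDipathFromTo_triple (hab : σ.arc a b) (hbc : σ.arc b c) (hac : a ≠ c) :
    IsDipathFromTo σ.arc a c [a, b, c] := by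
  simp [isDipathFromTo_iff, hab, hbc, (σ.adj_of_arc hab).ne, (σ.adj_of_arc hbc).ne, hac]

end EdgeOrientation

namespace IsSCOrientation

variable {G : SimpleGraph V} {σ : EdgeOrientation G} {a b c : V}

theorem not_transitive (hσ : IsSCOrientation σ) (hab : σ.arc a b) (hbc : σ.arc b c)
    (hac : σ.arc a c) : False := by
  have h2 : IsDipathFromTo σ.arc a c [a, c] := by
    simp [isDipathFromTo_iff, hac, (σ.adj_of_arc hac).ne]
  simpa using hσ a c _ _ h2 (σ.isDipathFromTo_triple hab hbc (σ.adj_of_arc hac).ne)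

theorem arc_of_triangle (hσ : IsSCOrientation σ) (hab : σ.arc a b) (hbc : G.Adj b c)
    (hca : G.Adj c a) : σ.arc b c ∧ σ.arc c a := by
  rcases (σ.adj_iff b c).1 hbc with hbc' | hcb <;> rcases (σ.adj_iff c a).1 hca with hca' | hac
  · exact ⟨hbc', hca'⟩
  · exact (hσ.not_transitive hab hbc' hac).elim
  · exact (hσ.not_transitive hca' hab hcb).elim
  · exact (hσ.not_transitive hac hcb hab).elim

end IsSCOrientation

theorem SCOrientable.diamondFree {G : SimpleGraph V} (h : SCOrientable G) : DiamondFree G := by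
  obtain ⟨σ, hσ⟩ := h
  suffices key : ∀ a b c d, σ.arc a b → G.Adj a c → G.Adj a d → G.Adj b c → G.Adj b d →
      c = d by
    intro a b c d hab hac had hbc hbd
    rcases (σ.adj_iff a b).1 hab with hab' | hba
    exacts [key a b c d hab' hac had hbc hbd, key b a c d hba hbc hbd hac had]
  intro a b c d hab hac had hbc hbd
  obtain ⟨hbc', hca⟩ := hσ.arc_of_triangle hab hbc hac.symm
  obtain ⟨hbd', hda⟩ := hσ.arc_of_triangle hab hbd had.symm
  have hba := (σ.adj_of_arc hab).ne'
  simpa using hσ b a _ _ (σ.isDipathFromTo_triple hbc' hca hba)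
    (σ.isDipathFromTo_triple hbd' hda hba)

theorem DHOn.sdhOn_of_diamondFree [DecidableEq V] {G : SimpleGraph V} {s : Finset V}
    (h : DHOn G s) (hG : DiamondFree G) : SDHOn G s := by
  induction h with
  | single v => exact .single v
  | pendant u v hu hv _ hN ih => exact .pendant u v hu hv ih hN
  | @trueTwin s u v hu hv _ hN ih =>
    by_cases hdeg : ∃ w ∈ s, G.Adj u w
    · obtain ⟨w, hw, huw⟩ := hdeg
      have huv : G.Adj u v := ((hN u hu).2 (Or.inr rfl)).symm
      exact .trueTwin u v hu hv ih hN ⟨w, ⟨hw, huw⟩, fun x ⟨hx, hux⟩ =>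
        hG huv hux huw ((hN x hx).2 (Or.inl hux)) ((hN w hw).2 (Or.inl huw))⟩
    · push Not at hdeg
      exact .pendant u v hu hv ih fun x hx => (hN x hx).trans (or_iff_right (hdeg x hx))
  | falseTwin u v hu hv _ hN ih =>
    refine .falseTwin u v hu hv ih hN fun x hx y hy hux huy hxy => ?_
    exact ne_of_mem_of_not_mem hu hv
      (hG hxy hux.symm ((hN x hx).2 hux).symm huy.symm ((hN y hy).2 huy).symm)

def addVertex (D : V → V → Prop) (v : V) (I O : V → Prop) : V → V → Prop :=
  fun x y => D x y ∨ (I x ∧ y = v) ∨ (x = v ∧ O y)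

theorem rel_of_addVertex {D : V → V → Prop} {v : V} {I O : V → Prop} :
    ∀ x y, addVertex D v I O x y → x ≠ v → y ≠ v → D x y := by
  rintro x y (h | ⟨-, rfl⟩ | ⟨rfl, -⟩) hx hy
  exacts [h, absurd rfl hy, absurd rfl hx]

theorem IsSource.addVertex {D : V → V → Prop} {v z : V} {I O : V → Prop} (hz : IsSource D z)
    (hI : z = v → ∀ x, ¬ I x) (hO : ¬ O z) : IsSource (addVertex D v I O) z := by
  rintro x (hxz | ⟨hx, rfl⟩ | ⟨-, hOz⟩)
  exacts [hz x hxz, hI rfl x hx, hO hOz]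

theorem IsSink.addVertex {D : V → V → Prop} {v z : V} {I O : V → Prop} (hz : IsSink D z)
    (hO : z = v → ∀ y, ¬ O y) (hI : ¬ I z) : IsSink (addVertex D v I O) z := by
  rintro y (hzy | ⟨hIz, -⟩ | ⟨rfl, hy⟩)
  exacts [hz y hzy, hI hIz, hO rfl y hy]

namespace SinglyConnected

variable {D D' : V → V → Prop} {v w : V}

theorem flip (h : SinglyConnected D) : SinglyConnected (flip D) :=
  fun s t _ _ hp hq => List.reverse_injective (h t s _ _ hp.reverse hq.reverse)

theorem bot : SinglyConnected (fun _ _ : V => False) := by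
  intro s t p q hp hq
  by_cases hst : s = t
  · subst hst
    rw [hp.eq_singleton, hq.eq_singleton]
  · obtain ⟨_, _, _, h, _⟩ := hp.exists_eq_cons hst
    exact h.elim

section Extension

variable (hD : SinglyConnected D) (hres : ∀ x y, D' x y → x ≠ v → y ≠ v → D x y)
include hD hres

theorem of_paths_through
    (hto : ∀ s p q, IsDipathFromTo D' s v p → IsDipathFromTo D' s v q → p = q)
    (hfrom : ∀ t p q, IsDipathFromTo D' v t p → IsDipathFromTo D' v t q → p = q)
    (hmem : ∀ s t p q, IsDipathFromTo D' s t p → IsDipathFromTo D' s t q → v ∈ p → v ∈ q) :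
    SinglyConnected D' := by
  have through : ∀ s t p q, IsDipathFromTo D' s t p → IsDipathFromTo D' s t q → v ∈ p →
      p = q := by
    intro s t p q hp hq hvp
    obtain ⟨A, B, rfl, hA, hB⟩ := hp.split hvp
    obtain ⟨A', B', rfl, hA', hB'⟩ := hq.split (hmem _ _ _ _ hp hq hvp)
    rw [List.append_cancel_right (hto _ _ _ hA hA'), (List.cons.inj (hfrom _ _ _ hB hB')).2]
  intro s t p q hp hq
  by_cases hvp : v ∈ p
  · exact through s t p q hp hq hvp
  by_cases hvq : v ∈ q
  · exact (through s t q p hq hp hvq).symm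
  exact hD s t p q (hp.mono_of_not_mem hres hvp) (hq.mono_of_not_mem hres hvq)

theorem paths_to_eq_of_pred_eq (hpred : ∀ x, D' x v → x = w) (s : V) (p q : List V)
    (hp : IsDipathFromTo D' s v p) (hq : IsDipathFromTo D' s v q) : p = q := by
  by_cases hs : s = v
  · subst hs
    rw [hp.eq_singleton, hq.eq_singleton]
  obtain ⟨x, A, rfl, hxv, hA, hvA⟩ := hp.exists_eq_concat hs
  obtain ⟨x', A', rfl, hx'v, hA', hvA'⟩ := hq.exists_eq_concat hs
  rw [hpred x hxv] at hA
  rw [hpred x' hx'v] at hA'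
  rw [hD s w A A' (hA.mono_of_not_mem hres hvA) (hA'.mono_of_not_mem hres hvA')]

theorem paths_from_eq_of_succ_eq (hsucc : ∀ y, D' v y → y = w) (t : V) (p q : List V)
    (hp : IsDipathFromTo D' v t p) (hq : IsDipathFromTo D' v t q) : p = q :=
  List.reverse_injective <| paths_to_eq_of_pred_eq hD.flip (fun x y h hx hy => hres y x h hy hx)
    hsucc t _ _ hp.reverse hq.reverse

end Extension

section AddVertex

variable {u : V}
variable (hD : SinglyConnected D) (hvin : IsSource D v) (hvout : IsSink D v)
include hD hvin hvout

theorem addVertex_pendant (huv : u ≠ v) :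
    SinglyConnected (addVertex D v (· = u) fun _ => False) := by
  have hsink : IsSink (addVertex D v (· = u) fun _ => False) v :=
    hvout.addVertex (fun _ _ h => h) huv.symm
  refine of_paths_through hD rel_of_addVertex
    (paths_to_eq_of_pred_eq hD rel_of_addVertex (w := u) ?_)
    (paths_from_eq_of_succ_eq hD rel_of_addVertex (w := u) fun y h => (hsink y h).elim) ?_
  · rintro x (h | ⟨rfl, -⟩ | ⟨-, h⟩)
    exacts [(hvin x h).elim, rfl, h.elim]
  · intro s t p q hp hq hvp
    exact hp.eq_of_isSink hvp hsink ▸ hq.last_mem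

theorem addVertex_twin_of_isSource (hu : IsSource D u) :
    SinglyConnected (addVertex D v (fun _ => False) (D u)) := by
  have hsrc : IsSource (addVertex D v (fun _ => False) (D u)) v :=
    hvin.addVertex (fun _ _ h => h) (hvin u)
  -- a path leaving the new vertex `v` is a path leaving its twin `u` with `u` renamed to `v`
  have from_v : ∀ t p, t ≠ v → IsDipathFromTo (addVertex D v (fun _ => False) (D u)) v t p →
      ∃ P, p = v :: P ∧ IsDipathFromTo D u t (u :: P) := by
    intro t p ht hp
    obtain ⟨y, P, rfl, hvy, hP, hvP⟩ := hp.exists_eq_cons ht.symm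
    have huy : D u y := by
      rcases hvy with h | ⟨h, -⟩ | ⟨-, h⟩
      exacts [(hvout y h).elim, h.elim, h]
    have hPD := hP.mono_of_not_mem rel_of_addVertex hvP
    exact ⟨P, rfl, hPD.cons huy fun huP => hu u (hPD.eq_of_isSource huP hu ▸ huy)⟩
  refine of_paths_through hD rel_of_addVertex (paths_to_eq_of_pred_eq hD rel_of_addVertex (w := v)
    fun x h => (hsrc x h).elim) ?_ ?_
  · intro t p q hp hq
    by_cases ht : t = v
    · subst ht
      rw [hp.eq_singleton, hq.eq_singleton]
    obtain ⟨P, rfl, hP⟩ := from_v t p ht hp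
    obtain ⟨Q, rfl, hQ⟩ := from_v t q ht hq
    rw [(List.cons.inj (hD _ _ _ _ hP hQ)).2]
  · intro s t p q hp hq hvp
    exact hp.eq_of_isSource hvp hsrc ▸ hq.head_mem

theorem addVertex_triangle (hu : IsSource D u) (huw : D u w) (hw : ∀ y, D u y → y = w) :
    SinglyConnected (addVertex D v (· = w) (· = u)) := by
  have hvu : v ≠ u := fun h => hvout w (h ▸ huw)
  have hvw : v ≠ w := fun h => hvin u (h ▸ huw)
  have hwu : w ≠ u := fun h => hu u (h ▸ huw)
  have hpred : ∀ x, addVertex D v (· = w) (· = u) x v → x = w := by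
    rintro x (h | ⟨rfl, -⟩ | ⟨rfl, h⟩)
    exacts [(hvin x h).elim, rfl, (hvu h).elim]
  have hsucc : ∀ y, addVertex D v (· = w) (· = u) v y → y = u := by
    rintro y (h | ⟨h, -⟩ | ⟨-, rfl⟩)
    exacts [(hvout y h).elim, (hvw h).elim, rfl]
  have hsucc_u : ∀ y, addVertex D v (· = w) (· = u) u y → y = w := by
    rintro y (h | ⟨h, -⟩ | ⟨h, -⟩)
    exacts [hw y h, (hwu h.symm).elim, (hvu h.symm).elim]
  refine of_paths_through hD rel_of_addVertex (paths_to_eq_of_pred_eq hD rel_of_addVertex hpred)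
    (paths_from_eq_of_succ_eq hD rel_of_addVertex hsucc) ?_
  intro s t p q hp hq hvp
  by_contra hvq
  have hsv : s ≠ v := fun h => hvq (h ▸ hq.head_mem)
  have htv : t ≠ v := fun h => hvq (h ▸ hq.last_mem)
  -- `q` avoids `v`, so it is a path of `D`, which cannot enter the source `u`
  by_cases htu : t = u
  · subst htu
    have hts := (hq.mono_of_not_mem rel_of_addVertex hvq).eq_of_isSource hq.last_mem hu
    subst hts
    rw [hp.eq_singleton, List.mem_singleton] at hvp
    exact htv hvp.symm
  -- otherwise `w` would occur both before and after `v` in `p`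
  obtain ⟨A, B, rfl, hA, hB⟩ := hp.split hvp
  obtain ⟨x, A', hAA', hxv, hA', -⟩ := hA.exists_eq_concat hsv
  obtain ⟨y, P, hBP, hvy, hP, -⟩ := hB.exists_eq_cons htv.symm
  rw [hsucc y hvy] at hP
  obtain ⟨y', P', rfl, huy', hP', -⟩ := hP.exists_eq_cons (Ne.symm htu)
  rw [hsucc_u y' huy'] at hP'
  have hwA : w ∈ A := List.append_cancel_right hAA' ▸ hpred x hxv ▸ hA'.last_mem
  have hwB : w ∈ v :: B := (List.cons.inj hBP).2 ▸ by simp [hP'.head_mem]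
  exact List.disjoint_of_nodup_append hp.nodup hwA hwB

end AddVertex

end SinglyConnected

def NeighborsIndepOn (G : SimpleGraph V) (s : Finset V) (u : V) : Prop :=
  ∀ x ∈ s, ∀ y ∈ s, G.Adj u x → G.Adj u y → ¬ G.Adj x y

theorem NeighborsIndepOn.mono {G : SimpleGraph V} {s t : Finset V} {u : V}
    (h : NeighborsIndepOn G t u) (hst : s ⊆ t) : NeighborsIndepOn G s u :=
  fun x hx y hy => h x (hst hx) y (hst hy)

/-- Copying the arcs at `u` to a false twin `v` doubles every path `x → u → y`, hence the last
field: a vertex that may still receive a false twin must be a source or a sink. -/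
structure IsSCOrientationOn (G : SimpleGraph V) (s : Finset V) (D : V → V → Prop) : Prop where
  left_mem : ∀ ⦃x y⦄, D x y → x ∈ s
  right_mem : ∀ ⦃x y⦄, D x y → y ∈ s
  adj : ∀ ⦃x y⦄, D x y → G.Adj x y
  arc_or_arc : ∀ ⦃x y⦄, x ∈ s → y ∈ s → G.Adj x y → D x y ∨ D y x
  asymm : ∀ ⦃x y⦄, D x y → ¬ D y x
  singlyConnected : SinglyConnected D
  isSource_or_isSink : ∀ z ∈ s, NeighborsIndepOn G s z → IsSource D z ∨ IsSink D z

namespace IsSCOrientationOn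

variable {G : SimpleGraph V} {s : Finset V} {D : V → V → Prop} {u v w : V}

theorem flip (h : IsSCOrientationOn G s D) : IsSCOrientationOn G s (flip D) where
  left_mem _ _ hxy := h.right_mem hxy
  right_mem _ _ hxy := h.left_mem hxy
  adj _ _ hxy := (h.adj hxy).symm
  arc_or_arc _ _ hx hy hxy := h.arc_or_arc hy hx hxy.symm
  asymm _ _ hxy hyx := h.asymm hyx hxy
  singlyConnected := h.singlyConnected.flip
  isSource_or_isSink z hz hind := (h.isSource_or_isSink z hz hind).symm

theorem singleton (v : V) : IsSCOrientationOn G {v} (fun _ _ => False) where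
  left_mem _ _ h := h.elim
  right_mem _ _ h := h.elim
  adj _ _ h := h.elim
  arc_or_arc _ _ hx hy hxy :=
    absurd ((Finset.mem_singleton.1 hx).trans (Finset.mem_singleton.1 hy).symm) hxy.ne
  asymm _ _ h := h.elim
  singlyConnected := SinglyConnected.bot
  isSource_or_isSink _ _ _ := Or.inl fun _ h => h

theorem isSource_of_not_mem (h : IsSCOrientationOn G s D) (hv : v ∉ s) : IsSource D v :=
  fun _ hxv => hv (h.right_mem hxv)

theorem isSink_of_not_mem (h : IsSCOrientationOn G s D) (hv : v ∉ s) : IsSink D v :=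
  fun _ hvy => hv (h.left_mem hvy)

theorem scOrientable [Fintype V] (h : IsSCOrientationOn G Finset.univ D) : SCOrientable G :=
  ⟨⟨D, fun x y => ⟨h.arc_or_arc (Finset.mem_univ x) (Finset.mem_univ y),
    fun hxy => hxy.elim (fun h' => h.adj h') (fun h' => (h.adj h').symm)⟩, fun _ _ => @h.asymm _ _⟩,
    h.singlyConnected⟩

variable [DecidableEq V]

theorem insert_addVertex (h : IsSCOrientationOn G s D) (hv : v ∉ s) {I O : V → Prop}
    (hI : ∀ x, I x → x ∈ s) (hO : ∀ y, O y → y ∈ s) (hadj : ∀ x ∈ s, G.Adj v x ↔ I x ∨ O x)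
    (hIO : ∀ x, I x → ¬ O x) (hsc : SinglyConnected (addVertex D v I O))
    (hnew : NeighborsIndepOn G (insert v s) v → (∀ x, ¬ I x) ∨ ∀ y, ¬ O y)
    (hold : ∀ z ∈ s, NeighborsIndepOn G (insert v s) z →
      (IsSource D z ∧ ¬ O z) ∨ (IsSink D z ∧ ¬ I z)) :
    IsSCOrientationOn G (insert v s) (addVertex D v I O) := by
  have hIv : ¬ I v := fun hIv => hv (hI v hIv)
  have hOv : ¬ O v := fun hOv => hv (hO v hOv)
  have hvin := h.isSource_of_not_mem hv
  have hvout := h.isSink_of_not_mem hv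
  refine ⟨?_, ?_, ?_, ?_, ?_, hsc, ?_⟩
  · rintro x y (hxy | ⟨hx, -⟩ | ⟨rfl, -⟩)
    exacts [Finset.mem_insert_of_mem (h.left_mem hxy), Finset.mem_insert_of_mem (hI x hx),
      Finset.mem_insert_self _ _]
  · rintro x y (hxy | ⟨-, rfl⟩ | ⟨-, hy⟩)
    exacts [Finset.mem_insert_of_mem (h.right_mem hxy), Finset.mem_insert_self _ _,
      Finset.mem_insert_of_mem (hO y hy)]
  · rintro x y (hxy | ⟨hx, rfl⟩ | ⟨rfl, hy⟩)
    exacts [h.adj hxy, ((hadj x (hI x hx)).2 (Or.inl hx)).symm, (hadj y (hO y hy)).2 (Or.inr hy)]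
  · intro x y hx hy hxy
    rcases Finset.mem_insert.1 hx with hxv | hx <;> rcases Finset.mem_insert.1 hy with hyv | hy
    · exact (G.irrefl (hxv ▸ hyv ▸ hxy)).elim
    · subst x
      exact ((hadj y hy).1 hxy).symm.imp (fun hOy => Or.inr (Or.inr ⟨rfl, hOy⟩))
        (fun hIy => Or.inr (Or.inl ⟨hIy, rfl⟩))
    · subst y
      exact ((hadj x hx).1 hxy.symm).imp (fun hIx => Or.inr (Or.inl ⟨hIx, rfl⟩))
        (fun hOx => Or.inr (Or.inr ⟨rfl, hOx⟩))
    · exact (h.arc_or_arc hx hy hxy).imp Or.inl Or.inl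
  · rintro x y (hxy | ⟨hx, rfl⟩ | ⟨rfl, hy⟩) (hyx | ⟨hy', hxv⟩ | ⟨hyv, hx'⟩)
    all_goals first
      | exact h.asymm hxy hyx
      | subst_vars; first
        | exact hvin _ ‹_› | exact hvout _ ‹_› | exact hIv ‹_› | exact hOv ‹_›
        | exact hIO _ ‹_› ‹_›
  · intro z hz hind
    rcases Finset.mem_insert.1 hz with hzv | hz
    · subst z
      exact (hnew hind).imp (fun hI' => hvin.addVertex (fun _ => hI') hOv)
        (fun hO' => hvout.addVertex (fun _ => hO') hIv)
    · have hzv := ne_of_mem_of_not_mem hz hv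
      exact (hold z hz hind).imp (fun ⟨hsrc, hOz⟩ => hsrc.addVertex (absurd · hzv) hOz)
        (fun ⟨hsnk, hIz⟩ => hsnk.addVertex (absurd · hzv) hIz)

theorem pendant (h : IsSCOrientationOn G s D) (hu : u ∈ s) (hv : v ∉ s)
    (hN : ∀ x ∈ s, G.Adj v x ↔ x = u) (hcase : IsSource D u ∨ ¬ NeighborsIndepOn G s u) :
    IsSCOrientationOn G (insert v s) (addVertex D v (· = u) fun _ => False) := by
  refine h.insert_addVertex hv (fun x hx => hx ▸ hu) (fun _ h => h.elim)
    (fun x hx => by simp [hN x hx])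
    (fun _ _ h => h) (h.singlyConnected.addVertex_pendant (h.isSource_of_not_mem hv)
      (h.isSink_of_not_mem hv) (ne_of_mem_of_not_mem hu hv)) (fun _ => Or.inr fun _ h => h) ?_
  intro z hz hind
  by_cases hzu : z = u
  · subst hzu
    exact Or.inl ⟨hcase.resolve_right fun h' => h' (hind.mono (Finset.subset_insert _ _)), id⟩
  · exact (h.isSource_or_isSink z hz (hind.mono (Finset.subset_insert _ _))).imp
      (fun hsrc => ⟨hsrc, id⟩) (fun hsnk => ⟨hsnk, hzu⟩)

theorem falseTwin (h : IsSCOrientationOn G s D) (hu : u ∈ s) (hv : v ∉ s)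
    (hN : ∀ x ∈ s, G.Adj v x ↔ G.Adj u x) (hsrc : IsSource D u) :
    IsSCOrientationOn G (insert v s) (addVertex D v (fun _ => False) (D u)) := by
  refine h.insert_addVertex hv (fun _ h => h.elim) (fun _ hy => h.right_mem hy) (fun x hx => ?_)
    (fun _ h => h.elim) (h.singlyConnected.addVertex_twin_of_isSource (h.isSource_of_not_mem hv)
      (h.isSink_of_not_mem hv) hsrc) (fun _ => Or.inl fun _ h => h) fun z hz hind => ?_
  · rw [hN x hx, false_or]
    exact ⟨fun hux => (h.arc_or_arc hu hx hux).resolve_right (hsrc x), fun hux => h.adj hux⟩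
  · exact (h.isSource_or_isSink z hz (hind.mono (Finset.subset_insert _ _))).imp
      (fun hsrc' => ⟨hsrc', hsrc' u⟩) (fun hsnk => ⟨hsnk, id⟩)

theorem trueTwin (h : IsSCOrientationOn G s D) (hu : u ∈ s) (hv : v ∉ s)
    (hN : ∀ x ∈ s, G.Adj v x ↔ G.Adj u x ∨ x = u) (huw : D u w)
    (hw : ∀ x ∈ s, G.Adj u x → x = w) :
    IsSCOrientationOn G (insert v s) (addVertex D v (· = w) (· = u)) := by
  have hws : w ∈ s := h.right_mem huw
  have hGuw : G.Adj u w := h.adj huw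
  have hGvu : G.Adj v u := (hN u hu).2 (Or.inr rfl)
  have hGvw : G.Adj v w := (hN w hws).2 (Or.inl hGuw)
  have hsrc : IsSource D u := fun x hxu =>
    h.asymm huw (hw x (h.left_mem hxu) (h.adj hxu).symm ▸ hxu)
  have hu' : u ∈ insert v s := Finset.mem_insert_of_mem hu
  have hw' : w ∈ insert v s := Finset.mem_insert_of_mem hws
  have hv' := Finset.mem_insert_self v s
  refine h.insert_addVertex hv (fun _ hx => hx ▸ hws) (fun _ hy => hy ▸ hu) (fun x hx => ?_)
    (fun _ hx hxu => hGuw.ne (hxu.symm.trans hx)) (h.singlyConnected.addVertex_triangle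
      (h.isSource_of_not_mem hv) (h.isSink_of_not_mem hv) hsrc huw
      fun y huy => hw y (h.right_mem huy) (h.adj huy))
    (fun hind => (hind u hu' w hw' hGvu hGvw hGuw).elim) fun z hz hind => ?_
  · rw [hN x hx]
    exact or_congr ⟨hw x hx, fun hxw => hxw ▸ hGuw⟩ Iff.rfl
  · by_cases hzu : z = u
    · exact (hind v hv' w hw' (hzu ▸ hGvu.symm) (hzu ▸ hGuw) hGvw).elim
    by_cases hzw : z = w
    · exact (hind u hu' v hv' (hzw ▸ hGuw.symm) (hzw ▸ hGvw.symm) hGvu.symm).elim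
    exact (h.isSource_or_isSink z hz (hind.mono (Finset.subset_insert _ _))).imp
      (fun hsrc' => ⟨hsrc', hzu⟩) (fun hsnk => ⟨hsnk, hzw⟩)

end IsSCOrientationOn

theorem SDHOn.exists_isSCOrientationOn [DecidableEq V] {G : SimpleGraph V} {s : Finset V}
    (h : SDHOn G s) : ∃ D, IsSCOrientationOn G s D := by
  induction h with
  | single v => exact ⟨_, .singleton v⟩
  | pendant u v hu hv _ hN ih =>
    obtain ⟨D, hD⟩ := ih
    by_cases hsrc : IsSource D u
    · exact ⟨_, hD.pendant hu hv hN (Or.inl hsrc)⟩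
    by_cases hsnk : IsSink D u
    · exact ⟨_, (hD.flip.pendant hu hv hN (Or.inl hsnk)).flip⟩
    exact ⟨_, hD.pendant hu hv hN
      (Or.inr fun hind => (hD.isSource_or_isSink u hu hind).elim hsrc hsnk)⟩
  | @trueTwin s u v hu hv _ hN hdeg ih =>
    obtain ⟨D, hD⟩ := ih
    obtain ⟨w, ⟨hw, huw⟩, hw_unique⟩ := hdeg
    have hw_unique' : ∀ x ∈ s, G.Adj u x → x = w := fun x hx hux => hw_unique x ⟨hx, hux⟩
    rcases hD.arc_or_arc hu hw huw with harc | harc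
    · exact ⟨_, hD.trueTwin hu hv hN harc hw_unique'⟩
    · exact ⟨_, (hD.flip.trueTwin hu hv hN harc hw_unique').flip⟩
  | falseTwin u v hu hv _ hN hind ih =>
    obtain ⟨D, hD⟩ := ih
    rcases hD.isSource_or_isSink u hu hind with hsrc | hsnk
    · exact ⟨_, hD.falseTwin hu hv hN hsrc⟩
    · exact ⟨_, (hD.flip.falseTwin hu hv hN hsnk).flip⟩

end

/-- A distance hereditary finite graph is sc-orientable iff it is strongly
distance hereditary. -/
theorem distanceHereditary_scOrientable_iff_strongly
    {V : Type*} [Fintype V] [DecidableEq V] (G : SimpleGraph V)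
    (hDH : DistanceHereditary G) :
    SCOrientable G ↔ StronglyDistanceHereditary G :=
  ⟨fun h => DHOn.sdhOn_of_diamondFree hDH h.diamondFree,
    fun h => (SDHOn.exists_isSCOrientationOn h).elim fun _ hD => hD.scOrientable⟩
end

section
/- Let G be a finite simple undirected graph that contains no house, no hole (cycle of length at least 5), no domino, and no diamond as a subgraph. Then every 2-vertex-connected component (block) of G is bipartite or a triangle. -/
/-- A subgraph `H` of `G` is 2-vertex-connected: it is connected and remains
connected after the deletion of any single vertex. -/
def TwoVertexConnected {V : Type*} {G : SimpleGraph V} (H : G.Subgraph) : Prop :=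
  H.Connected ∧ ∀ v ∈ H.verts, (H.deleteVerts {v}).Connected

/-- A block of `G`: a maximal 2-vertex-connected subgraph of `G`. -/
def IsBlock {V : Type*} {G : SimpleGraph V} (H : G.Subgraph) : Prop :=
  TwoVertexConnected H ∧ ∀ K : G.Subgraph, TwoVertexConnected K → H ≤ K → K = H

/-- The subgraph `H` is a triangle: its vertex set consists of three distinct
mutually adjacent vertices. -/
def IsTriangleSubgraph {V : Type*} {G : SimpleGraph V} (H : G.Subgraph) : Prop :=
  ∃ a b c : V, a ≠ b ∧ a ≠ c ∧ b ≠ c ∧ H.verts = {a, b, c} ∧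
    H.Adj a b ∧ H.Adj b c ∧ H.Adj a c

/-- The diamond graph: `K₄` minus one edge (here the edge `{2,3}` is missing). -/
def diamond : SimpleGraph (Fin 4) :=
  SimpleGraph.fromEdgeSet {s(0,1), s(0,2), s(0,3), s(1,2), s(1,3)}

/-- The house graph: the 4-cycle `0,1,2,3` together with the vertex `4`
adjacent to exactly `0` and `1`. -/
def house : SimpleGraph (Fin 5) :=
  SimpleGraph.fromEdgeSet {s(0,1), s(1,2), s(2,3), s(3,0), s(4,0), s(4,1)}

/-- The domino: the 2×3 grid graph. -/
def domino : SimpleGraph (Fin 6) :=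
  SimpleGraph.fromEdgeSet {s(0,1), s(2,3), s(4,5), s(0,2), s(2,4), s(1,3), s(3,5)}

/-- `X` occurs as a subgraph of `G`: there is an injective graph homomorphism
from `X` to `G`. -/
def HasSubgraphCopy {α β : Type*} (X : SimpleGraph α) (G : SimpleGraph β) : Prop :=
  ∃ f : X →g G, Function.Injective f

/-!
If a 2-connected subgraph `H` contains a triangle `abc`, any further neighbour `x` of `a` in `H` is
adjacent to neither `b` nor `c` (no diamond), and a path from `x` to `{b, c}` in `H - a` closes up
through `a` into a cycle of length at least 5, a hole. So the triangle is closed under adjacency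
in `H`, and by connectivity it is all of `H`. If `H` has no triangle, every cycle of `H` has
length 4, hence every closed walk of `H` has even length and `H` is bipartite.
-/

namespace SimpleGraph

variable {V W : Type*} {G : SimpleGraph V}

def HoleFree (G : SimpleGraph V) : Prop :=
  ∀ (v : V) (c : G.Walk v v), c.IsCycle → c.length < 5

namespace Walk

lemma two_le_length_of_not_adj {u v : V} (p : G.Walk u v) (hne : u ≠ v) (hnadj : ¬ G.Adj u v) :
    2 ≤ p.length := by
  by_contra! hp
  interval_cases hl : p.length
  · exact hne (eq_of_length_eq_zero hl)
  · exact hnadj (adj_of_length_eq_one hl)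

lemma IsPath.isCycle_cons {u v : V} {p : G.Walk v u} (hp : p.IsPath) (h : G.Adj u v)
    (hl : 2 ≤ p.length) : (cons h p).IsCycle :=
  (cons_isCycle_iff p h).mpr ⟨hp, fun he => by
    have := hp.length_eq_one_of_mem_edges (Sym2.eq_swap ▸ he)
    omega⟩

/-- A closed walk whose tail is not a path splits into two shorter closed walks. -/
theorem even_length_of_forall_isCycle_even
    (hcyc : ∀ (v : V) (c : G.Walk v v), c.IsCycle → Even c.length) (u : V) (w : G.Walk u u) :
    Even w.length := by
  induction hn : w.length using Nat.strong_induction_on generalizing u with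
  | _ n ih =>
  cases w with
  | nil => simp [← hn]
  | @cons _ v _ h p =>
    by_cases hp : p.IsPath
    · by_cases hl : 2 ≤ p.length
      · exact hn ▸ hcyc u _ (hp.isCycle_cons h hl)
      · have : p.length ≠ 0 := fun h0 => h.ne (eq_of_length_eq_zero h0).symm
        rw [← hn, length_cons]
        exact ⟨1, by omega⟩
    · obtain ⟨x, c, ⟨q₁, q₂, rfl⟩, hc⟩ :
          ∃ (x : V) (c : G.Walk x x), c.IsSubwalk p ∧ ¬ c.Nil := by
        simpa using mt isPath_iff_isSubwalk_imp_nil.mpr hp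
      have hc₀ : 0 < c.length := not_nil_iff_lt_length.mp hc
      simp only [length_cons, length_append] at hn
      have e₁ := ih c.length (by omega) x c rfl
      have e₂ := ih (cons h (q₁.append q₂)).length
        (by simp only [length_cons, length_append]; omega) u _ rfl
      simp only [length_cons, length_append] at e₂
      have hsplit : n = (q₁.length + q₂.length + 1) + c.length := by omega
      exact hsplit ▸ e₂.add e₁

end Walk

theorem colorable_two_of_forall_isCycle_even
    (hcyc : ∀ (v : V) (c : G.Walk v v), c.IsCycle → Even c.length) : G.Colorable 2 :=
  two_colorable_iff_forall_loop_even.mpr (Walk.even_length_of_forall_isCycle_even hcyc)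

namespace HoleFree

lemma comap {H : SimpleGraph W} (hG : G.HoleFree) {f : H →g G} (hf : Function.Injective f) :
    H.HoleFree := fun v c hc => by
  simpa using hG _ _ (hc.map hf)

theorem colorable_two_of_cliqueFree_three (hG : G.HoleFree) (h3 : G.CliqueFree 3) :
    G.Colorable 2 := by
  refine colorable_two_of_forall_isCycle_even fun v c hc => ?_
  have hne : c.length ≠ 3 := fun hl => by
    obtain ⟨s, hs⟩ := is3Clique_iff_exists_cycle_length_three.mpr ⟨v, c, hc, hl⟩
    exact h3 s hs
  have := hc.three_le_length
  have := hG v c hc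
  exact ⟨2, by omega⟩

lemma length_lt_two_of_isPath (hG : G.HoleFree) {a x y z : V} (hax : G.Adj a x)
    (hyz : G.Adj y z) (hza : G.Adj z a) {P : G.Walk x y} (hP : P.IsPath) (haP : a ∉ P.support)
    (hzP : z ∉ P.support) : P.length < 2 := by
  have hQ : (Walk.cons hza (Walk.cons hax P)).IsPath := by
    simp [Walk.cons_isPath_iff, hP, haP, hzP, hza.ne]
  have := hG _ _ (hQ.isCycle_cons hyz (by simp))
  simp only [Walk.length_cons] at this
  omega

end HoleFree

lemma hasSubgraphCopy_diamond {a b c d : V} (hab : G.Adj a b) (hac : G.Adj a c)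
    (had : G.Adj a d) (hbc : G.Adj b c) (hbd : G.Adj b d) (hcd : c ≠ d) :
    HasSubgraphCopy diamond G := by
  refine ⟨⟨![a, b, c, d], fun {i j} hij => ?_⟩, fun i j hij => ?_⟩
  · fin_cases i <;> fin_cases j <;> simp_all [diamond, adj_comm]
  · fin_cases i <;> fin_cases j <;> simp_all [hab.ne, hac.ne, had.ne, hbc.ne, hbd.ne, eq_comm]

namespace Subgraph

lemma exists_isPath_of_connected_deleteVerts {H : G.Subgraph} {a x y : V}
    (hH : (H.deleteVerts {a}).Connected) (hx : x ∈ H.verts) (hy : y ∈ H.verts) (hxa : x ≠ a)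
    (hya : y ≠ a) : ∃ P : G.Walk x y, P.IsPath ∧ a ∉ P.support := by
  classical
  obtain ⟨W⟩ := hH.preconnected ⟨x, hx, hxa⟩ ⟨y, hy, hya⟩
  let P : G.Walk x y := W.map (Subgraph.hom _)
  refine ⟨P.toPath, P.toPath.isPath, fun ha => ?_⟩
  have ha' : a ∈ W.support.map (Subgraph.hom _) :=
    Walk.support_map _ W ▸ P.support_toPath_subset_support ha
  obtain ⟨s, -, hs⟩ := List.mem_map.mp ha'
  exact s.2.2 (by simpa using hs)

lemma Connected.verts_subset_of_adj_closed {H : G.Subgraph} (hH : H.Connected) {S : Set V}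
    {a : V} (ha : a ∈ H.verts) (haS : a ∈ S) (hS : ∀ u v, H.Adj u v → u ∈ S → v ∈ S) :
    H.verts ⊆ S := by
  intro v hv
  by_contra hvS
  obtain ⟨p⟩ := hH.preconnected ⟨a, ha⟩ ⟨v, hv⟩
  obtain ⟨d, -, hd₁, hd₂⟩ := p.exists_boundary_dart {w : H.verts | (w : V) ∈ S} haS hvS
  exact hd₂ (hS _ _ d.adj hd₁)

end Subgraph

end SimpleGraph

open SimpleGraph

namespace TwoVertexConnected

variable {V : Type*} {G : SimpleGraph V} {H : G.Subgraph}

lemma eq_or_eq_of_adj_of_triangle (hH : TwoVertexConnected H) (hG : G.HoleFree)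
    (hD : ¬ HasSubgraphCopy diamond G) {a b c x : V} (hab : H.Adj a b) (hbc : H.Adj b c)
    (hac : H.Adj a c) (hax : H.Adj a x) : x = b ∨ x = c := by
  classical
  by_contra! ⟨hxb, hxc⟩
  have hGxb : ¬ G.Adj x b := fun h => hD <|
    hasSubgraphCopy_diamond hab.adj_sub hac.adj_sub hax.adj_sub hbc.adj_sub h.symm hxc.symm
  have hGxc : ¬ G.Adj x c := fun h => hD <|
    hasSubgraphCopy_diamond hac.adj_sub hab.adj_sub hax.adj_sub hbc.adj_sub.symm h.symm hxb.symm
  obtain ⟨P, hP, haP⟩ := Subgraph.exists_isPath_of_connected_deleteVerts (hH.2 a hab.fst_mem)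
    hax.snd_mem hab.snd_mem hax.adj_sub.ne' hab.adj_sub.ne'
  by_cases hcP : c ∈ P.support
  · have := hG.length_lt_two_of_isPath hax.adj_sub hbc.adj_sub.symm hab.adj_sub.symm
      (hP.takeUntil hcP) (fun h => haP (P.support_takeUntil_subset_support hcP h))
      (Walk.endpoint_notMem_support_takeUntil hP hcP hbc.adj_sub.ne)
    have := (P.takeUntil c hcP).two_le_length_of_not_adj hxc hGxc
    omega
  · have := hG.length_lt_two_of_isPath hax.adj_sub hbc.adj_sub hac.adj_sub.symm hP haP hcP
    have := P.two_le_length_of_not_adj hxb hGxb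
    omega

lemma isTriangleSubgraph (hH : TwoVertexConnected H) (hG : G.HoleFree)
    (hD : ¬ HasSubgraphCopy diamond G) {a b c : V} (hab : H.Adj a b) (hbc : H.Adj b c)
    (hac : H.Adj a c) : IsTriangleSubgraph H := by
  refine ⟨a, b, c, hab.adj_sub.ne, hac.adj_sub.ne, hbc.adj_sub.ne, ?_, hab, hbc, hac⟩
  refine (hH.1.verts_subset_of_adj_closed hab.fst_mem (by simp) ?_).antisymm ?_
  · rintro u v huv (rfl | rfl | rfl)
    · rcases hH.eq_or_eq_of_adj_of_triangle hG hD hab hbc hac huv with rfl | rfl <;> simp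
    · rcases hH.eq_or_eq_of_adj_of_triangle hG hD hab.symm hac hbc huv with rfl | rfl <;> simp
    · rcases hH.eq_or_eq_of_adj_of_triangle hG hD hac.symm hab hbc.symm huv with rfl | rfl <;>
        simp
  · simp [Set.insert_subset_iff, hab.fst_mem, hab.snd_mem, hac.snd_mem]

end TwoVertexConnected

theorem blocks_bipartite_or_triangle_of_HHDD_free_general
    {V : Type*} (G : SimpleGraph V)
    (hhole : ∀ (v : V) (c : G.Walk v v), c.IsCycle → c.length < 5)
    (hdiamond : ¬ HasSubgraphCopy diamond G) :
    ∀ H : G.Subgraph, IsBlock H →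
      (H.coe.Colorable 2 ∨ IsTriangleSubgraph H) := by
  classical
  intro H hH
  by_cases hK₃ : H.coe.CliqueFree 3
  · exact .inl ((HoleFree.comap hhole H.hom_injective).colorable_two_of_cliqueFree_three hK₃)
  · obtain ⟨s, hs⟩ : ∃ s, H.coe.IsNClique 3 s := by simpa [CliqueFree] using hK₃
    obtain ⟨a, b, c, hab, hac, hbc, rfl⟩ := is3Clique_iff.mp hs
    exact .inr (hH.1.isTriangleSubgraph hhole hdiamond hab hbc hac)

/-- If a finite graph contains no house, no hole (cycle of length at least 5),
no domino and no diamond as a subgraph, then every block (maximal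
2-vertex-connected subgraph) of `G` is bipartite or a triangle. -/
theorem blocks_bipartite_or_triangle_of_HHDD_free
    {V : Type*} [Fintype V] (G : SimpleGraph V)
    (hhouse : ¬ HasSubgraphCopy house G)
    (hhole : ∀ (v : V) (c : G.Walk v v), c.IsCycle → c.length < 5)
    (hdomino : ¬ HasSubgraphCopy domino G)
    (hdiamond : ¬ HasSubgraphCopy diamond G) :
    ∀ H : G.Subgraph, IsBlock H →
      (H.coe.Colorable 2 ∨ IsTriangleSubgraph H) :=
  blocks_bipartite_or_triangle_of_HHDD_free_general G hhole hdiamond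
end
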